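/- Completeness Theorem for the Hilbert system of MID: for all MID-formulas φ and ψ, if φ⊨ψ then φ⊢_{MID}ψ, where the Hilbert system of MID consists of all axioms and rules of the Hilbert system of MT₀ that do not involve ⊗. -/

import Mathlib

/-- Classical formulas of MID: α ::= p | ⊥ | α∧α | α→α | □α | ◇α. -/
inductive MIDC : Type where
  | var : ℕ → MIDC
  | bot : MIDC
  | and : MIDC → MIDC → MIDC
  | impl : MIDC → MIDC → MIDC
  | box : MIDC → MIDC
  | dia : MIDC → MIDC

/-- Formulas of modal intuitionistic dependence logic MID:
φ ::= α | ⊥ | =(α₁,…,αₙ,β) | φ∧φ | φ∨φ | φ→φ | □φ | ◇φ, with α,αᵢ,β classical. -/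
inductive MIDForm : Type where
  | var : ℕ → MIDForm
  | bot : MIDForm
  | dep : List MIDC → MIDC → MIDForm
  | and : MIDForm → MIDForm → MIDForm
  | or : MIDForm → MIDForm → MIDForm
  | impl : MIDForm → MIDForm → MIDForm
  | box : MIDForm → MIDForm
  | dia : MIDForm → MIDForm

/-- The structural embedding of classical formulas into MID formulas. -/
def MIDC.toMID : MIDC → MIDForm
  | .var p => .var p
  | .bot => .bot
  | .and α β => .and α.toMID β.toMID
  | .impl α β => .impl α.toMID β.toMID
  | .box α => .box α.toMID
  | .dia α => .dia α.toMID

/-- ¬φ abbreviates φ→⊥. -/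
def mneg (φ : MIDForm) : MIDForm := φ.impl .bot

/-- φ↔ψ abbreviates (φ→ψ)∧(ψ→φ). -/
def MIDForm.iff (φ ψ : MIDForm) : MIDForm := (φ.impl ψ).and (ψ.impl φ)

/-- The law of excluded middle formula α∨¬α for a classical formula α. -/
def exclMid (α : MIDC) : MIDForm := (α.toMID).or (mneg α.toMID)

/-- Conjunction of a list of formulas; the empty conjunction is ⊥→⊥ (truth). -/
def bigAnd : List MIDForm → MIDForm
  | [] => MIDForm.impl .bot .bot
  | [φ] => φ
  | φ :: ψ :: χs => .and φ (bigAnd (ψ :: χs))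

/-- A (classical modal) Kripke model M = (W,R,V) with W nonempty. -/
structure KModel where
  W : Type
  ne : Nonempty W
  R : W → W → Prop
  V : ℕ → Set W

/-- R(X) = {w : ∃ v ∈ X, vRw}. -/
def KModel.img (M : KModel) (X : Set M.W) : Set M.W := {w | ∃ v ∈ X, M.R v w}

/-- Y is a successor team of X: Y ⊆ R(X) and Y ∩ R(w) ≠ ∅ for every w ∈ X. -/
def KModel.succT (M : KModel) (X Y : Set M.W) : Prop :=
  Y ⊆ M.img X ∧ ∀ w ∈ X, ∃ u ∈ Y, M.R w u

/-- Team semantics for classical formulas of MID. -/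
def KModel.csat (M : KModel) : Set M.W → MIDC → Prop
  | X, .var p => X ⊆ M.V p
  | X, .bot => X = ∅
  | X, .and α β => M.csat X α ∧ M.csat X β
  | X, .impl α β => ∀ Y ⊆ X, M.csat Y α → M.csat Y β
  | X, .box α => M.csat (M.img X) α
  | X, .dia α => ∃ Y, M.succT X Y ∧ M.csat Y α

/-- Team semantics for MID formulas. -/
def KModel.sat (M : KModel) : Set M.W → MIDForm → Prop
  | X, .var p => X ⊆ M.V p
  | X, .bot => X = ∅
  | X, .dep αs β => ∀ w ∈ X, ∀ u ∈ X,
      (∀ α ∈ αs, (M.csat {w} α ↔ M.csat {u} α)) → (M.csat {w} β ↔ M.csat {u} β)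
  | X, .and φ ψ => M.sat X φ ∧ M.sat X ψ
  | X, .or φ ψ => M.sat X φ ∨ M.sat X ψ
  | X, .impl φ ψ => ∀ Y ⊆ X, M.sat Y φ → M.sat Y ψ
  | X, .box φ => M.sat (M.img X) φ
  | X, .dia φ => ∃ Y, M.succT X Y ∧ M.sat Y φ

/-- φ⊨ψ : semantic entailment. -/
def MIDEntails (φ ψ : MIDForm) : Prop :=
  ∀ (M : KModel) (X : Set M.W), M.sat X φ → M.sat X ψ

/-- Axiom schemes of the Hilbert system of MID: all axioms and rules of the
Hilbert system of MT₀ that do not involve ⊗. -/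
inductive MIDAx : MIDForm → Prop where
  -- axiom schemes of intuitionistic propositional logic
  | ipc1 (φ ψ : MIDForm) : MIDAx (φ.impl (ψ.impl φ))
  | ipc2 (φ ψ χ : MIDForm) :
      MIDAx ((φ.impl (ψ.impl χ)).impl ((φ.impl ψ).impl (φ.impl χ)))
  | ipc3a (φ ψ : MIDForm) : MIDAx ((φ.and ψ).impl φ)
  | ipc3b (φ ψ : MIDForm) : MIDAx ((φ.and ψ).impl ψ)
  | ipc4 (φ χ : MIDForm) : MIDAx (φ.impl (χ.impl (φ.and χ)))
  | ipc5a (φ ψ : MIDForm) : MIDAx (φ.impl (φ.or ψ))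
  | ipc5b (φ ψ : MIDForm) : MIDAx (ψ.impl (φ.or ψ))
  | ipc6 (φ ψ χ : MIDForm) :
      MIDAx ((φ.impl χ).impl ((ψ.impl χ).impl ((φ.or ψ).impl χ)))
  | ipc7 (φ : MIDForm) : MIDAx (MIDForm.bot.impl φ)
  -- the split axiom, for classical α
  | split (α : MIDC) (φ ψ : MIDForm) :
      MIDAx ((α.toMID.impl (φ.or ψ)).impl ((α.toMID.impl φ).or (α.toMID.impl ψ)))
  -- double negation law for classical α
  | dne (α : MIDC) : MIDAx ((mneg (mneg α.toMID)).impl α.toMID)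
  -- modal axiom schemes (Fischer Servi's IK)
  | kbox (φ ψ : MIDForm) :
      MIDAx ((MIDForm.box (φ.impl ψ)).impl ((MIDForm.box φ).impl (MIDForm.box ψ)))
  | kdia (φ ψ : MIDForm) :
      MIDAx ((MIDForm.box (φ.impl ψ)).impl ((MIDForm.dia φ).impl (MIDForm.dia ψ)))
  | negDiaBot : MIDAx (mneg (MIDForm.dia .bot))
  | diaOr (φ ψ : MIDForm) :
      MIDAx ((MIDForm.dia (φ.or ψ)).impl ((MIDForm.dia φ).or (MIDForm.dia ψ)))
  | fs (φ ψ : MIDForm) :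
      MIDAx (((MIDForm.dia φ).impl (MIDForm.box ψ)).impl (MIDForm.box (φ.impl ψ)))
  -- dependence atom axiom
  | depAx (αs : List MIDC) (β : MIDC) :
      MIDAx ((MIDForm.dep αs β).iff ((bigAnd (αs.map exclMid)).impl (exclMid β)))
  -- interaction of box and diamond on classical formulas
  | boxDiaNeg (α : MIDC) :
      MIDAx ((mneg (MIDForm.box α.toMID)).impl (MIDForm.dia (mneg α.toMID)))
  -- box distributes over intuitionistic disjunction
  | boxOr (φ ψ : MIDForm) :
      MIDAx ((MIDForm.box (φ.or ψ)).impl ((MIDForm.box φ).or (MIDForm.box ψ)))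

/-- Theorems of the Hilbert system of MID. -/
inductive MIDThm : MIDForm → Prop where
  | ax {φ : MIDForm} : MIDAx φ → MIDThm φ
  | mp {φ ψ : MIDForm} : MIDThm (φ.impl ψ) → MIDThm φ → MIDThm ψ
  | nec {φ : MIDForm} : MIDThm φ → MIDThm φ.box

/-- φ⊢ψ : derivations of ψ from the assumption φ, in which necessitation is
applied only to theorems. -/
inductive MIDDer (γ : MIDForm) : MIDForm → Prop where
  | hyp : MIDDer γ γ
  | thm {φ : MIDForm} : MIDThm φ → MIDDer γ φ
  | mp {φ ψ : MIDForm} : MIDDer γ (φ.impl ψ) → MIDDer γ φ → MIDDer γ ψ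

/-! ### Hilbert-style toolkit -/

namespace MIDKit

open MIDForm

abbrev T (φ : MIDForm) : Prop := MIDThm φ

lemma tK (φ ψ : MIDForm) : T (φ.impl (ψ.impl φ)) := .ax (.ipc1 _ _)
lemma tS (φ ψ χ : MIDForm) :
    T ((φ.impl (ψ.impl χ)).impl ((φ.impl ψ).impl (φ.impl χ))) := .ax (.ipc2 _ _ _)

lemma tId (φ : MIDForm) : T (φ.impl φ) :=
  ((tS φ (φ.impl φ) φ).mp (tK _ _)).mp (tK _ _)

lemma rconst {a : MIDForm} (h : T a) (χ : MIDForm) : T (χ.impl a) := (tK _ _).mp h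

lemma tTrans {φ ψ χ : MIDForm} (h : T (φ.impl ψ)) (g : T (ψ.impl χ)) : T (φ.impl χ) :=
  ((tS φ ψ χ).mp (rconst g φ)).mp h

lemma rap {χ a b : MIDForm} (f : T (χ.impl (a.impl b))) (x : T (χ.impl a)) : T (χ.impl b) :=
  ((tS χ a b).mp f).mp x

lemma tSwap {a b c : MIDForm} (h : T (a.impl (b.impl c))) : T (b.impl (a.impl c)) :=
  tTrans (tK b a) ((tS a b c).mp h)

lemma tB1 {b c : MIDForm} (g : T (b.impl c)) (a : MIDForm) :
    T ((a.impl b).impl (a.impl c)) := (tS a b c).mp (rconst g a)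

lemma tCompInner {a b c d : MIDForm} (h : T (a.impl (b.impl c))) (g : T (c.impl d)) :
    T (a.impl (b.impl d)) := tTrans h (tB1 g b)

lemma tT' (a b c : MIDForm) :
    T ((b.impl c).impl ((a.impl b).impl (a.impl c))) :=
  tTrans (tK (b.impl c) a) (tS a b c)

lemma tT (a b c : MIDForm) :
    T ((a.impl b).impl ((b.impl c).impl (a.impl c))) := tSwap (tT' a b c)

lemma tPre {a b : MIDForm} (h : T (a.impl b)) (c : MIDForm) :
    T ((b.impl c).impl (a.impl c)) := (tT a b c).mp h

lemma tAndE1 (a b : MIDForm) : T ((a.and b).impl a) := .ax (.ipc3a _ _)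
lemma tAndE2 (a b : MIDForm) : T ((a.and b).impl b) := .ax (.ipc3b _ _)
lemma tAndI (a b : MIDForm) : T (a.impl (b.impl (a.and b))) := .ax (.ipc4 _ _)

lemma rand {χ a b : MIDForm} (h : T (χ.impl a)) (g : T (χ.impl b)) :
    T (χ.impl (a.and b)) := rap (rap (rconst (tAndI a b) χ) h) g

lemma tAndMono {a a' b b' : MIDForm} (h : T (a.impl a')) (g : T (b.impl b')) :
    T ((a.and b).impl (a'.and b')) :=
  rand (tTrans (tAndE1 a b) h) (tTrans (tAndE2 a b) g)

lemma tOrI1 (a b : MIDForm) : T (a.impl (a.or b)) := .ax (.ipc5a _ _)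
lemma tOrI2 (a b : MIDForm) : T (b.impl (a.or b)) := .ax (.ipc5b _ _)

lemma tOrE {a b c : MIDForm} (h : T (a.impl c)) (g : T (b.impl c)) :
    T ((a.or b).impl c) := ((MIDThm.ax (.ipc6 a b c)).mp h).mp g

lemma tOrMono {a a' b b' : MIDForm} (h : T (a.impl a')) (g : T (b.impl b')) :
    T ((a.or b).impl (a'.or b')) :=
  tOrE (tTrans h (tOrI1 a' b')) (tTrans g (tOrI2 a' b'))

lemma tImpMono {a a' b b' : MIDForm} (h : T (a'.impl a)) (g : T (b.impl b')) :
    T ((a.impl b).impl (a'.impl b')) := tTrans (tPre h b) (tB1 g a')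

lemma tBoxMono {a b : MIDForm} (h : T (a.impl b)) : T (a.box.impl b.box) :=
  (MIDThm.ax (.kbox a b)).mp (.nec h)

lemma tDiaMono {a b : MIDForm} (h : T (a.impl b)) : T (a.dia.impl b.dia) :=
  (MIDThm.ax (.kdia a b)).mp (.nec h)

lemma tEfq (φ : MIDForm) : T (MIDForm.bot.impl φ) := .ax (.ipc7 _)

lemma tCurry {a b c : MIDForm} (h : T ((a.and b).impl c)) : T (a.impl (b.impl c)) :=
  tCompInner (tAndI a b) h

lemma tUncurry {a b c : MIDForm} (h : T (a.impl (b.impl c))) : T ((a.and b).impl c) :=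
  rap (tTrans (tAndE1 a b) h) (tAndE2 a b)

lemma tAndOrDistrib (a b c : MIDForm) :
    T ((a.and (b.or c)).impl ((a.and b).or (a.and c))) := by
  have hb : T (b.impl (a.impl ((a.and b).or (a.and c)))) :=
    tSwap (tCompInner (tAndI a b) (tOrI1 _ _))
  have hc : T (c.impl (a.impl ((a.and b).or (a.and c)))) :=
    tSwap (tCompInner (tAndI a c) (tOrI2 _ _))
  exact rap (tTrans (tAndE2 a (b.or c)) (tOrE hb hc)) (tAndE1 a (b.or c))

/-- Provable equivalence. -/
def Eqv (φ ψ : MIDForm) : Prop := T (φ.impl ψ) ∧ T (ψ.impl φ)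

lemma Eqv.refl (φ : MIDForm) : Eqv φ φ := ⟨tId φ, tId φ⟩
lemma Eqv.symm {φ ψ : MIDForm} (h : Eqv φ ψ) : Eqv ψ φ := ⟨h.2, h.1⟩
lemma Eqv.trans {φ ψ χ : MIDForm} (h : Eqv φ ψ) (g : Eqv ψ χ) : Eqv φ χ :=
  ⟨tTrans h.1 g.1, tTrans g.2 h.2⟩
lemma Eqv.and {a a' b b' : MIDForm} (h : Eqv a a') (g : Eqv b b') :
    Eqv (a.and b) (a'.and b') := ⟨tAndMono h.1 g.1, tAndMono h.2 g.2⟩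
lemma Eqv.or {a a' b b' : MIDForm} (h : Eqv a a') (g : Eqv b b') :
    Eqv (a.or b) (a'.or b') := ⟨tOrMono h.1 g.1, tOrMono h.2 g.2⟩
lemma Eqv.imp {a a' b b' : MIDForm} (h : Eqv a a') (g : Eqv b b') :
    Eqv (a.impl b) (a'.impl b') := ⟨tImpMono h.2 g.1, tImpMono h.1 g.2⟩
lemma Eqv.box {a b : MIDForm} (h : Eqv a b) : Eqv a.box b.box :=
  ⟨tBoxMono h.1, tBoxMono h.2⟩
lemma Eqv.dia {a b : MIDForm} (h : Eqv a b) : Eqv a.dia b.dia :=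
  ⟨tDiaMono h.1, tDiaMono h.2⟩

end MIDKit
/-! ### Disjunctive normal form -/

namespace MIDKit

/-- Big disjunction of classical formulas. -/
def bigOr : List MIDC → MIDForm
  | [] => .bot
  | α :: l => .or α.toMID (bigOr l)

lemma orBotEqv (χ : MIDForm) : Eqv (χ.or .bot) χ := ⟨tOrE (tId _) (tEfq _), tOrI1 _ _⟩

lemma bigOr_singleton (α : MIDC) : Eqv (bigOr [α]) α.toMID := orBotEqv _

lemma bigAnd_cons_eqv (φ : MIDForm) (l : List MIDForm) :
    Eqv (bigAnd (φ :: l)) (φ.and (bigAnd l)) := by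
  cases l with
  | nil =>
      exact ⟨rand (tId _) (rconst (tId _) _), tAndE1 _ _⟩
  | cons ψ χs => exact Eqv.refl _

lemma bigOr_mem {α : MIDC} {l : List MIDC} (h : α ∈ l) :
    T (α.toMID.impl (bigOr l)) := by
  induction l with
  | nil => cases h
  | cons β l ih =>
      rcases List.mem_cons.1 h with rfl | h
      · exact tOrI1 _ _
      · exact tTrans (ih h) (tOrI2 _ _)

lemma bigOr_append (l l' : List MIDC) :
    Eqv (bigOr (l ++ l')) ((bigOr l).or (bigOr l')) := by
  induction l with
  | nil => exact ⟨tOrI2 _ _, tOrE (tEfq _) (tId _)⟩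
  | cons a l ih =>
      constructor
      · exact tOrE (tTrans (tOrI1 _ _) (tOrI1 _ _))
          (tTrans ih.1 (tOrE (tTrans (tOrI2 _ _) (tOrI1 _ _)) (tOrI2 _ _)))
      · exact tOrE (tOrE (tOrI1 _ _) (tTrans (tTrans (tOrI1 _ _) ih.2) (tOrI2 _ _)))
          (tTrans (tTrans (tOrI2 _ _) ih.2) (tOrI2 _ _))

/-- Distribute a single conjunct over a big disjunction. -/
lemma andDistribList (a : MIDC) (l : List MIDC) :
    Eqv (MIDForm.and a.toMID (bigOr l)) (bigOr (l.map (a.and ·))) := by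
  induction l with
  | nil => exact ⟨tAndE2 _ _, tEfq _⟩
  | cons b l ih =>
      refine Eqv.trans ⟨tAndOrDistrib _ _ _, tOrE (tAndMono (tId _) (tOrI1 _ _))
        (tAndMono (tId _) (tOrI2 _ _))⟩ ?_
      exact Eqv.or (Eqv.refl _) ih

/-- Pairwise conjunctions of two disjunction lists. -/
def prodList (l l' : List MIDC) : List MIDC := l.foldr (fun a acc => l'.map (a.and ·) ++ acc) []

lemma prodListEqv (l l' : List MIDC) :
    Eqv ((bigOr l).and (bigOr l')) (bigOr (prodList l l')) := by
  induction l with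
  | nil => exact ⟨tAndE1 _ _, tEfq _⟩
  | cons a l ih =>
      have comm1 : T (((MIDForm.or a.toMID (bigOr l)).and (bigOr l')).impl
          ((bigOr l').and (a.toMID.or (bigOr l)))) := rand (tAndE2 _ _) (tAndE1 _ _)
      have dist : Eqv ((a.toMID.or (bigOr l)).and (bigOr l'))
          ((a.toMID.and (bigOr l')).or ((bigOr l).and (bigOr l'))) := by
        constructor
        · exact tTrans comm1 (tTrans (tAndOrDistrib _ _ _)
            (tOrMono (rand (tAndE2 _ _) (tAndE1 _ _)) (rand (tAndE2 _ _) (tAndE1 _ _))))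
        · exact tOrE (tAndMono (tOrI1 _ _) (tId _)) (tAndMono (tOrI2 _ _) (tId _))
      refine Eqv.trans dist ?_
      refine Eqv.trans (Eqv.or (andDistribList a l') ih) ?_
      exact (bigOr_append _ _).symm

/-- Implications from a single classical antecedent into a big disjunction. -/
def dImpl (a : MIDC) (l : List MIDC) : List MIDC := l.map (a.impl ·) ++ [a.impl .bot]

lemma dImplEqv (a : MIDC) (l : List MIDC) :
    Eqv (MIDForm.impl a.toMID (bigOr l)) (bigOr (dImpl a l)) := by
  induction l with
  | nil => exact ⟨tOrI1 _ _, tOrE (tId _) (tEfq _)⟩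
  | cons b l ih =>
      have splitE : Eqv (MIDForm.impl a.toMID ((MIDC.toMID b).or (bigOr l)))
          ((a.toMID.impl b.toMID).or (a.toMID.impl (bigOr l))) := by
        constructor
        · exact .ax (.split a _ _)
        · exact tOrE (tImpMono (tId _) (tOrI1 _ _)) (tImpMono (tId _) (tOrI2 _ _))
      exact Eqv.trans splitE (Eqv.or (Eqv.refl _) ih)

/-- Disjunction-list form for an implication between disjunctions. -/
def implList : List MIDC → List MIDC → List MIDC
  | [], _ => [MIDC.impl .bot .bot]
  | a :: l, l' => prodList (dImpl a l') (implList l l')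

lemma implListEqv (l l' : List MIDC) :
    Eqv ((bigOr l).impl (bigOr l')) (bigOr (implList l l')) := by
  induction l with
  | nil =>
      constructor
      · exact rconst ((tOrI1 _ _).mp (tId _)) _
      · exact rconst (tEfq _) _
  | cons a l ih =>
      have curry : Eqv ((MIDForm.or a.toMID (bigOr l)).impl (bigOr l'))
          ((a.toMID.impl (bigOr l')).and ((bigOr l).impl (bigOr l'))) := by
        constructor
        · exact rand (tPre (tOrI1 _ _) _) (tPre (tOrI2 _ _) _)
        · exact rap (rap (rconst (.ax (.ipc6 _ _ _)) _) (tAndE1 _ _)) (tAndE2 _ _)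
      refine Eqv.trans curry ?_
      refine Eqv.trans (Eqv.and (dImplEqv a l') ih) ?_
      exact prodListEqv _ _

lemma boxListEqv (l : List MIDC) :
    Eqv (MIDForm.box (bigOr l)) (bigOr (l.map .box ++ [.box .bot])) := by
  induction l with
  | nil => exact ⟨tOrI1 _ _, tOrE (tId _) (tEfq _)⟩
  | cons a l ih =>
      have step : Eqv (MIDForm.box ((MIDC.toMID a).or (bigOr l)))
          ((MIDForm.box a.toMID).or (MIDForm.box (bigOr l))) := by
        constructor
        · exact .ax (.boxOr _ _)
        · exact tOrE (tBoxMono (tOrI1 _ _)) (tBoxMono (tOrI2 _ _))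
      exact Eqv.trans step (Eqv.or (Eqv.refl _) ih)

lemma diaListEqv (l : List MIDC) :
    Eqv (MIDForm.dia (bigOr l)) (bigOr (l.map .dia)) := by
  induction l with
  | nil => exact ⟨.ax .negDiaBot, tEfq _⟩
  | cons a l ih =>
      have step : Eqv (MIDForm.dia ((MIDC.toMID a).or (bigOr l)))
          ((MIDForm.dia a.toMID).or (MIDForm.dia (bigOr l))) := by
        constructor
        · exact .ax (.diaOr _ _)
        · exact tOrE (tDiaMono (tOrI1 _ _)) (tDiaMono (tOrI2 _ _))
      exact Eqv.trans step (Eqv.or (Eqv.refl _) ih)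

lemma exclMidEqv (α : MIDC) : Eqv (exclMid α) (bigOr [α, α.impl .bot]) :=
  Eqv.or (Eqv.refl _) (orBotEqv _).symm

lemma bigAndExclEqv (αs : List MIDC) :
    ∃ l : List MIDC, Eqv (bigAnd (αs.map exclMid)) (bigOr l) := by
  induction αs with
  | nil => exact ⟨[MIDC.impl .bot .bot], ⟨tOrI1 _ _, tOrE (tId _) (tEfq _)⟩⟩
  | cons α αs ih =>
      obtain ⟨l, hl⟩ := ih
      refine ⟨prodList [α, α.impl .bot] l, ?_⟩
      refine Eqv.trans (bigAnd_cons_eqv _ _) ?_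
      refine Eqv.trans (Eqv.and (exclMidEqv α) hl) ?_
      exact prodListEqv _ _

/-- Every MID formula is provably equivalent to a disjunction of classical formulas. -/
theorem nf (φ : MIDForm) : ∃ l : List MIDC, Eqv φ (bigOr l) := by
  induction φ with
  | var p => exact ⟨[.var p], (orBotEqv _).symm⟩
  | bot => exact ⟨[], Eqv.refl _⟩
  | dep αs β =>
      have hax : T ((MIDForm.dep αs β).iff
          ((bigAnd (αs.map exclMid)).impl (exclMid β))) := .ax (.depAx αs β)
      have hdep : Eqv (MIDForm.dep αs β) ((bigAnd (αs.map exclMid)).impl (exclMid β)) :=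
        ⟨(tAndE1 _ _).mp hax, (tAndE2 _ _).mp hax⟩
      obtain ⟨l, hl⟩ := bigAndExclEqv αs
      refine ⟨implList l [β, β.impl .bot], ?_⟩
      refine Eqv.trans hdep ?_
      refine Eqv.trans (Eqv.imp hl (exclMidEqv β)) ?_
      exact implListEqv _ _
  | and φ ψ ihφ ihψ =>
      obtain ⟨l₁, h₁⟩ := ihφ; obtain ⟨l₂, h₂⟩ := ihψ
      exact ⟨prodList l₁ l₂, Eqv.trans (Eqv.and h₁ h₂) (prodListEqv _ _)⟩
  | or φ ψ ihφ ihψ =>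
      obtain ⟨l₁, h₁⟩ := ihφ; obtain ⟨l₂, h₂⟩ := ihψ
      exact ⟨l₁ ++ l₂, Eqv.trans (Eqv.or h₁ h₂) (bigOr_append _ _).symm⟩
  | impl φ ψ ihφ ihψ =>
      obtain ⟨l₁, h₁⟩ := ihφ; obtain ⟨l₂, h₂⟩ := ihψ
      exact ⟨implList l₁ l₂, Eqv.trans (Eqv.imp h₁ h₂) (implListEqv _ _)⟩
  | box φ ih =>
      obtain ⟨l, h⟩ := ih
      exact ⟨l.map .box ++ [.box .bot], Eqv.trans (Eqv.box h) (boxListEqv _)⟩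
  | dia φ ih =>
      obtain ⟨l, h⟩ := ih
      exact ⟨l.map .dia, Eqv.trans (Eqv.dia h) (diaListEqv _)⟩

end MIDKit
/-! ### Semantics: basic lemmas -/

namespace MIDKit

variable {M : KModel}

lemma sat_var {X : Set M.W} {p} : M.sat X (.var p) ↔ X ⊆ M.V p := Iff.rfl
lemma sat_bot {X : Set M.W} : M.sat X .bot ↔ X = ∅ := Iff.rfl
lemma sat_and {X : Set M.W} {φ ψ} : M.sat X (φ.and ψ) ↔ M.sat X φ ∧ M.sat X ψ := Iff.rfl
lemma sat_or {X : Set M.W} {φ ψ} : M.sat X (φ.or ψ) ↔ M.sat X φ ∨ M.sat X ψ := Iff.rfl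
lemma sat_impl {X : Set M.W} {φ ψ} :
    M.sat X (φ.impl ψ) ↔ ∀ Y ⊆ X, M.sat Y φ → M.sat Y ψ := Iff.rfl
lemma sat_box {X : Set M.W} {φ} : M.sat X φ.box ↔ M.sat (M.img X) φ := Iff.rfl
lemma sat_dia {X : Set M.W} {φ} :
    M.sat X φ.dia ↔ ∃ Y, M.succT X Y ∧ M.sat Y φ := Iff.rfl
lemma sat_dep {X : Set M.W} {αs β} : M.sat X (.dep αs β) ↔ ∀ w ∈ X, ∀ u ∈ X,
    (∀ α ∈ αs, (M.csat {w} α ↔ M.csat {u} α)) → (M.csat {w} β ↔ M.csat {u} β) := Iff.rfl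

lemma img_mono {X X' : Set M.W} (h : X ⊆ X') : M.img X ⊆ M.img X' := by
  rintro w ⟨v, hv, hr⟩; exact ⟨v, h hv, hr⟩

lemma sat_empty (φ : MIDForm) : M.sat ∅ φ := by
  induction φ with
  | var p => exact Set.empty_subset _
  | bot => rfl
  | dep αs β => rintro w ⟨⟩
  | and φ ψ ihφ ihψ => exact ⟨ihφ, ihψ⟩
  | or φ ψ ihφ ihψ => exact Or.inl ihφ
  | impl φ ψ ihφ ihψ =>
      intro Y hY h
      rw [Set.subset_empty_iff] at hY; subst hY; exact ihψ
  | box φ ih =>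
      have : M.img ∅ = ∅ := by
        ext w; simp [KModel.img]
      rw [sat_box, this]; exact ih
  | dia φ ih =>
      exact ⟨∅, ⟨Set.empty_subset _, by rintro w ⟨⟩⟩, ih⟩

/-- Downward closure of team satisfaction. -/
lemma sat_mono {φ : MIDForm} : ∀ {X X' : Set M.W}, M.sat X φ → X' ⊆ X → M.sat X' φ := by
  induction φ with
  | var p => exact fun h h' => h'.trans h
  | bot => intro X X' h h'; rw [sat_bot] at *; subst h; exact Set.subset_empty_iff.1 h'
  | dep αs β => intro X X' h h' w hw u hu; exact h w (h' hw) u (h' hu)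
  | and φ ψ ihφ ihψ => exact fun h h' => ⟨ihφ h.1 h', ihψ h.2 h'⟩
  | or φ ψ ihφ ihψ => rintro X X' (h | h) h'; exacts [Or.inl (ihφ h h'), Or.inr (ihψ h h')]
  | impl φ ψ ihφ ihψ => exact fun h h' Y hY hφ => h Y (hY.trans h') hφ
  | box φ ih => exact fun h h' => ih h (img_mono h')
  | dia φ ih =>
      rintro X X' ⟨Y, ⟨hsub, hsucc⟩, hY⟩ h'
      refine ⟨{u ∈ Y | ∃ w ∈ X', M.R w u}, ⟨?_, ?_⟩, ih hY (Set.sep_subset _ _)⟩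
      · rintro u ⟨hu, w, hw, hr⟩; exact ⟨w, hw, hr⟩
      · intro w hw
        obtain ⟨u, hu, hr⟩ := hsucc w (h' hw)
        exact ⟨u, ⟨hu, w, hw, hr⟩, hr⟩

/-- Classical single-world Kripke semantics. -/
def wsat (M : KModel) : M.W → MIDC → Prop
  | w, .var p => w ∈ M.V p
  | _, .bot => False
  | w, .and α β => wsat M w α ∧ wsat M w β
  | w, .impl α β => wsat M w α → wsat M w β
  | w, .box α => ∀ v, M.R w v → wsat M v α
  | w, .dia α => ∃ v, M.R w v ∧ wsat M v α

/-- Flatness of classical formulas. -/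
lemma csat_flat (α : MIDC) : ∀ X : Set M.W, M.csat X α ↔ ∀ w ∈ X, wsat M w α := by
  induction α with
  | var p => intro X; exact Iff.rfl
  | bot => intro X; simp [KModel.csat, wsat, Set.eq_empty_iff_forall_notMem]
  | and α β ihα ihβ =>
      intro X
      show M.csat X α ∧ M.csat X β ↔ _
      rw [ihα, ihβ]
      constructor
      · rintro ⟨h1, h2⟩ w hw; exact ⟨h1 w hw, h2 w hw⟩
      · intro h; exact ⟨fun w hw => (h w hw).1, fun w hw => (h w hw).2⟩
  | impl α β ihα ihβ =>
      intro X
      show (∀ Y ⊆ X, M.csat Y α → M.csat Y β) ↔ _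
      constructor
      · intro h w hw hα
        have := h {w} (Set.singleton_subset_iff.2 hw)
          ((ihα {w}).2 (by rintro v rfl; exact hα))
        exact (ihβ {w}).1 this w rfl
      · intro h Y hY hα
        rw [ihβ]
        intro w hw
        exact h w (hY hw) ((ihα Y).1 hα w hw)
  | box α ih =>
      intro X
      show M.csat (M.img X) α ↔ _
      rw [ih]
      constructor
      · intro h w hw v hr; exact h v ⟨w, hw, hr⟩
      · rintro h v ⟨w, hw, hr⟩; exact h w hw v hr
  | dia α ih =>
      intro X
      show (∃ Y, M.succT X Y ∧ M.csat Y α) ↔ _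
      constructor
      · rintro ⟨Y, ⟨hsub, hsucc⟩, hY⟩ w hw
        obtain ⟨u, hu, hr⟩ := hsucc w hw
        exact ⟨u, hr, (ih Y).1 hY u hu⟩
      · intro h
        refine ⟨{u | ∃ w ∈ X, M.R w u ∧ wsat M u α}, ⟨?_, ?_⟩, ?_⟩
        · rintro u ⟨w, hw, hr, _⟩; exact ⟨w, hw, hr⟩
        · intro w hw; obtain ⟨v, hr, hv⟩ := h w hw; exact ⟨v, ⟨w, hw, hr, hv⟩, hr⟩
        · rw [ih]; rintro u ⟨w, hw, hr, hv⟩; exact hv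

lemma csat_single {w : M.W} {α : MIDC} : M.csat {w} α ↔ wsat M w α := by
  rw [csat_flat]; simp

/-- Team satisfaction of an embedded classical formula is classical satisfaction. -/
lemma sat_toMID (α : MIDC) : ∀ X : Set M.W, M.sat X α.toMID ↔ M.csat X α := by
  induction α with
  | var p => intro X; exact Iff.rfl
  | bot => intro X; exact Iff.rfl
  | and α β ihα ihβ =>
      intro X
      show M.sat X α.toMID ∧ M.sat X β.toMID ↔ _
      rw [ihα, ihβ]; exact Iff.rfl
  | impl α β ihα ihβ =>
      intro X
      show (∀ Y ⊆ X, M.sat Y α.toMID → M.sat Y β.toMID) ↔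
        (∀ Y ⊆ X, M.csat Y α → M.csat Y β)
      constructor
      · intro h Y hY hα; exact (ihβ Y).1 (h Y hY ((ihα Y).2 hα))
      · intro h Y hY hα; exact (ihβ Y).2 (h Y hY ((ihα Y).1 hα))
  | box α ih =>
      intro X
      show M.sat (M.img X) α.toMID ↔ _
      rw [ih]; exact Iff.rfl
  | dia α ih =>
      intro X
      show (∃ Y, M.succT X Y ∧ M.sat Y α.toMID) ↔ ∃ Y, M.succT X Y ∧ M.csat Y α
      constructor
      · rintro ⟨Y, h1, h2⟩; exact ⟨Y, h1, (ih Y).1 h2⟩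
      · rintro ⟨Y, h1, h2⟩; exact ⟨Y, h1, (ih Y).2 h2⟩

lemma sat_mneg_toMID {X : Set M.W} {α : MIDC} :
    M.sat X (mneg α.toMID) ↔ ∀ w ∈ X, ¬ wsat M w α := by
  constructor
  · intro h w hw hws
    have : ({w} : Set M.W) = ∅ :=
      h {w} (Set.singleton_subset_iff.2 hw) ((sat_toMID α _).2 (csat_single.2 hws))
    exact absurd this (by simp)
  · intro h Y hY hα
    show Y = ∅
    rw [Set.eq_empty_iff_forall_notMem]
    intro w hw
    exact h w (hY hw) ((csat_flat α Y).1 ((sat_toMID α Y).1 hα) w hw)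

lemma sat_bigAnd {X : Set M.W} : ∀ l : List MIDForm,
    (M.sat X (bigAnd l) ↔ ∀ φ ∈ l, M.sat X φ) := by
  intro l
  induction l with
  | nil => simp [bigAnd]; intro Y hY h; exact h
  | cons φ l ih =>
      cases l with
      | nil => simp [bigAnd]
      | cons ψ χs =>
          show M.sat X φ ∧ M.sat X (bigAnd (ψ :: χs)) ↔ _
          rw [ih]; simp

/-! ### Soundness -/

theorem soundness {φ : MIDForm} (h : MIDThm φ) :
    ∀ (M : KModel) (X : Set M.W), M.sat X φ := by
  induction h with
  | mp h1 h2 ih1 ih2 => exact fun M X => ih1 M X X subset_rfl (ih2 M X)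
  | nec h ih => exact fun M X => ih M (M.img X)
  | ax hax =>
    intro M X
    cases hax with
    | ipc1 φ ψ => exact fun Y hY hφ Z hZ hψ => sat_mono hφ hZ
    | ipc2 φ ψ χ =>
        exact fun Y hY h1 Z hZ h2 U hU hφ =>
          h1 U (hU.trans hZ) hφ U subset_rfl (h2 U hU hφ)
    | ipc3a φ ψ => exact fun Y hY h => h.1
    | ipc3b φ ψ => exact fun Y hY h => h.2
    | ipc4 φ χ => exact fun Y hY hφ Z hZ hχ => ⟨sat_mono hφ hZ, hχ⟩
    | ipc5a φ ψ => exact fun Y hY h => Or.inl h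
    | ipc5b φ ψ => exact fun Y hY h => Or.inr h
    | ipc6 φ ψ χ =>
        intro Y hY h1 Z hZ h2 U hU hor
        rcases hor with h | h
        · exact h1 U (hU.trans hZ) h
        · exact h2 U hU h
    | ipc7 φ =>
        intro Y hY h
        rw [sat_bot] at h; subst h; exact sat_empty _
    | split α φ ψ =>
        intro Y hY h
        have hZα : M.sat {w ∈ Y | wsat M w α} α.toMID :=
          (sat_toMID α _).2 ((csat_flat α _).2 (fun w hw => hw.2))
        rcases h {w ∈ Y | wsat M w α} (Set.sep_subset _ _) hZα with hφ | hψ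
        · refine Or.inl (fun U hU hUα => sat_mono hφ ?_)
          exact fun u hu => ⟨hU hu, (csat_flat α U).1 ((sat_toMID α U).1 hUα) u hu⟩
        · refine Or.inr (fun U hU hUα => sat_mono hψ ?_)
          exact fun u hu => ⟨hU hu, (csat_flat α U).1 ((sat_toMID α U).1 hUα) u hu⟩
    | dne α =>
        intro Y hY h
        refine (sat_toMID α Y).2 ((csat_flat α Y).2 ?_)
        intro w hw
        by_contra hn
        have : ({w} : Set M.W) = ∅ :=
          h {w} (Set.singleton_subset_iff.2 hw)
            (sat_mneg_toMID.2 (by rintro v rfl; exact hn))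
        simp at this
    | kbox φ ψ => exact fun Y hY h1 Z hZ h2 => h1 (M.img Z) (img_mono hZ) h2
    | kdia φ ψ =>
        rintro Y hY h1 Z hZ ⟨U, hs, hφ⟩
        exact ⟨U, hs, h1 U (hs.1.trans (img_mono hZ)) hφ⟩
    | negDiaBot =>
        rintro Y hY ⟨U, ⟨hsub, hsucc⟩, hbot⟩
        rw [sat_bot] at hbot; subst hbot
        show Y = ∅
        rw [Set.eq_empty_iff_forall_notMem]
        intro w hw
        obtain ⟨u, hu, _⟩ := hsucc w hw
        exact hu
    | diaOr φ ψ =>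
        rintro Y hY ⟨U, hs, h | h⟩
        exacts [Or.inl ⟨U, hs, h⟩, Or.inr ⟨U, hs, h⟩]
    | fs φ ψ =>
        intro Y hY h U hU hφ
        have hsucc : M.succT {w ∈ Y | ∃ u ∈ U, M.R w u} U := by
          constructor
          · intro u hu
            obtain ⟨w, hw, hr⟩ := hU hu
            exact ⟨w, ⟨hw, u, hu, hr⟩, hr⟩
          · rintro w ⟨hw, u, hu, hr⟩; exact ⟨u, hu, hr⟩
        have := h _ (Set.sep_subset _ _) ⟨U, hsucc, hφ⟩
        exact sat_mono this hsucc.1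
    | depAx αs β =>
        refine ⟨?_, ?_⟩
        · intro Y hY hdep Z hZ hbig
          rw [sat_bigAnd] at hbig
          have hagree : ∀ α ∈ αs, ∀ w ∈ Z, ∀ u ∈ Z, (wsat M w α ↔ wsat M u α) := by
            intro α hα w hw u hu
            rcases hbig (exclMid α) (List.mem_map_of_mem hα) with h | h
            · have := (csat_flat α Z).1 ((sat_toMID α Z).1 h)
              exact iff_of_true (this w hw) (this u hu)
            · have := sat_mneg_toMID.1 h
              exact iff_of_false (this w hw) (this u hu)
          by_cases hc : ∀ w ∈ Z, wsat M w β
          · exact Or.inl ((sat_toMID β Z).2 ((csat_flat β Z).2 hc))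
          · push_neg at hc
            obtain ⟨w₀, hw₀, hn⟩ := hc
            refine Or.inr (sat_mneg_toMID.2 ?_)
            intro u hu hus
            have hiff := hdep w₀ (hZ hw₀) u (hZ hu) (fun α hα => by
              rw [csat_single, csat_single]; exact hagree α hα w₀ hw₀ u hu)
            exact hn (csat_single.1 (hiff.2 (csat_single.2 hus)))
        · intro Y hY hRHS w hw u hu hagree
          have hZsub : ({w, u} : Set M.W) ⊆ Y := by rintro v (rfl | rfl); exacts [hw, hu]
          have hbig : M.sat {w, u} (bigAnd (αs.map exclMid)) := by
            rw [sat_bigAnd]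
            intro χ hχ
            rw [List.mem_map] at hχ
            obtain ⟨α, hα, rfl⟩ := hχ
            have hiff : wsat M w α ↔ wsat M u α := by
              rw [← csat_single (M := M), ← csat_single (M := M)]; exact hagree α hα
            by_cases hwα : wsat M w α
            · refine Or.inl ((sat_toMID α _).2 ((csat_flat α _).2 ?_))
              rintro v (rfl | rfl); exacts [hwα, hiff.1 hwα]
            · refine Or.inr (sat_mneg_toMID.2 ?_)
              rintro v (rfl | rfl); exacts [hwα, fun h => hwα (hiff.2 h)]
          rw [csat_single, csat_single]
          rcases hRHS {w, u} hZsub hbig with h | h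
          · have := (csat_flat β _).1 ((sat_toMID β _).1 h)
            exact iff_of_true (this w (Or.inl rfl)) (this u (Or.inr rfl))
          · have := sat_mneg_toMID.1 h
            exact iff_of_false (this w (Or.inl rfl)) (this u (Or.inr rfl))
    | boxDiaNeg α =>
        intro Y hY h
        refine ⟨{v ∈ M.img Y | ¬ wsat M v α}, ⟨Set.sep_subset _ _, ?_⟩,
          sat_mneg_toMID.2 (fun v hv => hv.2)⟩
        intro w hw
        by_contra hn
        push_neg at hn
        have hall : ∀ v, M.R w v → wsat M v α := by
          intro v hr
          by_contra hnv
          exact hn v ⟨⟨w, hw, hr⟩, hnv⟩ hr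
        have hbox : M.sat {w} (MIDForm.box α.toMID) := by
          show M.sat (M.img {w}) α.toMID
          refine (sat_toMID α _).2 ((csat_flat α _).2 ?_)
          rintro v ⟨w', rfl, hr⟩
          exact hall v hr
        have : ({w} : Set M.W) = ∅ := h {w} (Set.singleton_subset_iff.2 hw) hbox
        simp at this
    | boxOr φ ψ =>
        intro Y hY h
        rcases h with h | h
        exacts [Or.inl h, Or.inr h]

lemma Eqv.sound {φ ψ : MIDForm} (h : Eqv φ ψ) (M : KModel) (X : Set M.W) :
    M.sat X φ ↔ M.sat X ψ :=
  ⟨fun s => soundness h.1 M X X subset_rfl s, fun s => soundness h.2 M X X subset_rfl s⟩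

/-! ### Consistency, Lindenbaum -/

end MIDKit

deriving instance DecidableEq for MIDC

namespace MIDKit

private def enc : MIDC → ℕ
  | .var p => Nat.pair 0 p
  | .bot => Nat.pair 1 0
  | .and a b => Nat.pair 2 (Nat.pair (enc a) (enc b))
  | .impl a b => Nat.pair 3 (Nat.pair (enc a) (enc b))
  | .box a => Nat.pair 4 (enc a)
  | .dia a => Nat.pair 5 (enc a)

private lemma enc_inj : Function.Injective enc := by
  intro a
  induction a with
  | var p => intro b hb; cases b <;> simp [enc, Nat.pair_eq_pair] at hb <;> simp [hb]
  | bot => intro b hb; cases b <;> simp [enc, Nat.pair_eq_pair] at hb <;> simp [hb]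
  | and x y ihx ihy =>
      intro b hb; cases b <;> simp [enc, Nat.pair_eq_pair] at hb
      rw [ihx hb.1, ihy hb.2]
  | impl x y ihx ihy =>
      intro b hb; cases b <;> simp [enc, Nat.pair_eq_pair] at hb
      rw [ihx hb.1, ihy hb.2]
  | box x ihx =>
      intro b hb; cases b <;> simp [enc, Nat.pair_eq_pair] at hb
      rw [ihx hb]
  | dia x ihx =>
      intro b hb; cases b <;> simp [enc, Nat.pair_eq_pair] at hb
      rw [ihx hb]

instance : Countable MIDC := ⟨⟨enc, enc_inj⟩⟩

/-- The conjunction of a list of classical formulas, as a MID formula. -/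
def lAnd (l : List MIDC) : MIDForm := bigAnd (l.map MIDC.toMID)

lemma bigAnd_elem {φ : MIDForm} {l : List MIDForm} (h : φ ∈ l) :
    T ((bigAnd l).impl φ) := by
  induction l with
  | nil => cases h
  | cons ψ l ih =>
      rcases List.mem_cons.1 h with rfl | h
      · exact tTrans (bigAnd_cons_eqv _ _).1 (tAndE1 _ _)
      · exact tTrans (bigAnd_cons_eqv _ _).1 (tTrans (tAndE2 _ _) (ih h))

lemma bigAnd_intro {χ : MIDForm} {l : List MIDForm} (h : ∀ φ ∈ l, T (χ.impl φ)) :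
    T (χ.impl (bigAnd l)) := by
  induction l with
  | nil => exact rconst (tId _) _
  | cons ψ l ih =>
      exact tTrans (rand (h ψ (List.mem_cons_self))
        (ih (fun φ hφ => h φ (List.mem_cons_of_mem _ hφ)))) (bigAnd_cons_eqv _ _).2

lemma lAnd_elem {α : MIDC} {l : List MIDC} (h : α ∈ l) : T ((lAnd l).impl α.toMID) :=
  bigAnd_elem (List.mem_map_of_mem h)

lemma lAnd_subset {l l' : List MIDC} (h : ∀ α ∈ l, α ∈ l') :
    T ((lAnd l').impl (lAnd l)) := by
  refine bigAnd_intro ?_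
  intro φ hφ
  rw [List.mem_map] at hφ
  obtain ⟨α, hα, rfl⟩ := hφ
  exact lAnd_elem (h α hα)

/-- Consistency of a set of classical formulas. -/
def Con (Γ : Set MIDC) : Prop :=
  ∀ l : List MIDC, (∀ α ∈ l, α ∈ Γ) → ¬ T ((lAnd l).impl .bot)

/-- Maximal consistent sets. -/
def Mcs (Γ : Set MIDC) : Prop := Con Γ ∧ ∀ α, α ∈ Γ ∨ (α.impl .bot) ∈ Γ

lemma filter_neg_impl {l : List MIDC} {α : MIDC} (h : T ((lAnd l).impl .bot)) :
    T ((lAnd (l.filter (· ≠ α))).impl (mneg α.toMID)) := by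
  have hsub : T ((lAnd (α :: l.filter (· ≠ α))).impl (lAnd l)) := by
    refine lAnd_subset ?_
    intro β hβ
    by_cases hb : β = α
    · subst hb; exact List.mem_cons_self
    · exact List.mem_cons_of_mem _ (List.mem_filter.2 ⟨hβ, by simpa using hb⟩)
  have h1 : T ((lAnd (α :: l.filter (· ≠ α))).impl .bot) := tTrans hsub h
  have h2 : T ((MIDForm.and α.toMID (lAnd (l.filter (· ≠ α)))).impl .bot) :=
    tTrans (bigAnd_cons_eqv _ _).2 h1
  have h3 : T ((MIDForm.and (lAnd (l.filter (· ≠ α))) α.toMID).impl .bot) :=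
    tTrans (rand (tAndE2 _ _) (tAndE1 _ _)) h2
  exact tCurry h3

lemma con_insert {Γ : Set MIDC} (h : Con Γ) (α : MIDC) :
    Con (insert α Γ) ∨ Con (insert (α.impl .bot) Γ) := by
  by_contra hc
  push_neg at hc
  obtain ⟨h1, h2⟩ := hc
  simp only [Con, not_forall, not_not] at h1 h2
  obtain ⟨l₁, hl₁, hd₁⟩ := h1
  obtain ⟨l₂, hl₂, hd₂⟩ := h2
  set l₁' := l₁.filter (· ≠ α) with hl₁'def
  set l₂' := l₂.filter (· ≠ (α.impl .bot)) with hl₂'def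
  have d1 : T ((lAnd l₁').impl (mneg α.toMID)) := filter_neg_impl hd₁
  have d2 : T ((lAnd l₂').impl α.toMID) := by
    have := filter_neg_impl (α := α.impl .bot) hd₂
    exact tTrans this (.ax (.dne α))
  have hmem : ∀ β ∈ l₁' ++ l₂', β ∈ Γ := by
    intro β hβ
    rcases List.mem_append.1 hβ with hβ | hβ
    · have := List.mem_filter.1 hβ
      rcases hl₁ β this.1 with h | h
      · exact absurd h (by simpa using this.2)
      · exact h
    · have := List.mem_filter.1 hβ
      rcases hl₂ β this.1 with h | h
      · exact absurd h (by simpa using this.2)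
      · exact h
  refine h (l₁' ++ l₂') hmem ?_
  have c1 : T ((lAnd (l₁' ++ l₂')).impl (mneg α.toMID)) :=
    tTrans (lAnd_subset (fun β hβ => List.mem_append_left _ hβ)) d1
  have c2 : T ((lAnd (l₁' ++ l₂')).impl α.toMID) :=
    tTrans (lAnd_subset (fun β hβ => List.mem_append_right _ hβ)) d2
  exact rap c1 c2

attribute [local instance] Classical.propDecidable

/-- The Lindenbaum chain. -/
noncomputable def lchain (e : ℕ → MIDC) (Γ : Set MIDC) : ℕ → Set MIDC
  | 0 => Γ
  | n + 1 =>
      if Con (insert (e n) (lchain e Γ n)) then insert (e n) (lchain e Γ n)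
      else insert ((e n).impl .bot) (lchain e Γ n)

instance : Nonempty MIDC := ⟨.bot⟩

lemma lchain_succ (e : ℕ → MIDC) (Γ : Set MIDC) (n : ℕ) :
    lchain e Γ n ⊆ lchain e Γ (n + 1) := by
  show lchain e Γ n ⊆ (if Con (insert (e n) (lchain e Γ n)) then insert (e n) (lchain e Γ n)
      else insert ((e n).impl .bot) (lchain e Γ n))
  split <;> exact Set.subset_insert _ _

lemma lchain_mono {e Γ} : ∀ {m n : ℕ}, m ≤ n → lchain e Γ m ⊆ lchain e Γ n := by
  intro m n h
  induction n with
  | zero => rw [Nat.le_zero.1 h]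
  | succ n ih =>
      rcases Nat.le_succ_iff.1 h with h' | h'
      · exact (ih h').trans (lchain_succ e Γ n)
      · rw [h']

lemma lchain_con {e Γ} (h : Con Γ) : ∀ n, Con (lchain e Γ n) := by
  intro n
  induction n with
  | zero => exact h
  | succ n ih =>
      show Con (if Con (insert (e n) (lchain e Γ n)) then insert (e n) (lchain e Γ n)
        else insert ((e n).impl .bot) (lchain e Γ n))
      split
      · assumption
      · rcases con_insert ih (e n) with h' | h'
        · exact absurd h' (by assumption)
        · exact h'

lemma lindenbaum {Γ : Set MIDC} (h : Con Γ) : ∃ Δ, Γ ⊆ Δ ∧ Mcs Δ := by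
  obtain ⟨e, he⟩ := exists_surjective_nat MIDC
  refine ⟨⋃ n, lchain e Γ n, fun α hα => Set.mem_iUnion.2 ⟨0, hα⟩, ?_, ?_⟩
  · -- consistency of the union
    intro l hl hd
    have : ∃ n, ∀ α ∈ l, α ∈ lchain e Γ n := by
      clear hd
      induction l with
      | nil => exact ⟨0, by simp⟩
      | cons β l ih =>
          obtain ⟨n, hn⟩ := ih (fun α hα => hl α (List.mem_cons_of_mem _ hα))
          obtain ⟨m, hm⟩ := Set.mem_iUnion.1 (hl β (List.mem_cons_self))
          refine ⟨max m n, ?_⟩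
          intro α hα
          rcases List.mem_cons.1 hα with rfl | hα
          · exact lchain_mono (le_max_left _ _) hm
          · exact lchain_mono (le_max_right _ _) (hn α hα)
    obtain ⟨n, hn⟩ := this
    exact lchain_con h n l hn hd
  · -- completeness
    intro α
    obtain ⟨n, rfl⟩ := he α
    by_cases hc : Con (insert (e n) (lchain e Γ n))
    · exact Or.inl (Set.mem_iUnion.2 ⟨n + 1, by show e n ∈ ite _ _ _; rw [if_pos hc]; exact Set.mem_insert _ _⟩)
    · exact Or.inr (Set.mem_iUnion.2 ⟨n + 1, by show _ ∈ ite _ _ _; rw [if_neg hc]; exact Set.mem_insert _ _⟩)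

end MIDKit

/-! ### Canonical model and classical completeness -/

namespace MIDKit

lemma Mcs.closed {Γ : Set MIDC} (h : Mcs Γ) {l : List MIDC} {α : MIDC}
    (hl : ∀ β ∈ l, β ∈ Γ) (hd : T ((lAnd l).impl α.toMID)) : α ∈ Γ := by
  rcases h.2 α with hα | hn
  · exact hα
  exfalso
  refine h.1 ((α.impl .bot) :: l) ?_ ?_
  · intro β hβ
    rcases List.mem_cons.1 hβ with rfl | hβ
    exacts [hn, hl β hβ]
  · have e : T ((lAnd ((α.impl .bot) :: l)).impl
        (MIDForm.and (mneg α.toMID) (lAnd l))) := (bigAnd_cons_eqv _ _).1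
    exact tTrans e (rap (tAndE1 _ _) (tTrans (tAndE2 _ _) hd))

lemma Mcs.mem_of_thm {Γ : Set MIDC} (h : Mcs Γ) {α : MIDC} (hd : T α.toMID) : α ∈ Γ :=
  h.closed (l := []) (by simp) (rconst hd _)

lemma Mcs.closed1 {Γ : Set MIDC} (h : Mcs Γ) {α β : MIDC}
    (hα : α ∈ Γ) (hd : T (α.toMID.impl β.toMID)) : β ∈ Γ :=
  h.closed (l := [α]) (by simpa using hα) hd

lemma Mcs.not_mem_neg {Γ : Set MIDC} (h : Mcs Γ) {α : MIDC}
    (hα : α ∈ Γ) (hn : (α.impl .bot) ∈ Γ) : False := by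
  refine h.1 [α.impl .bot, α] ?_ ?_
  · intro β hβ
    rcases List.mem_cons.1 hβ with rfl | hβ
    · exact hn
    rcases List.mem_cons.1 hβ with rfl | hβ
    · exact hα
    · cases hβ
  · exact rap (tAndE1 _ _) (tAndE2 _ _)

lemma Mcs.bot_not_mem {Γ : Set MIDC} (h : Mcs Γ) : MIDC.bot ∉ Γ := by
  intro hb
  exact h.1 [.bot] (by simpa using hb) (tId _)

lemma Mcs.and_mem {Γ : Set MIDC} (h : Mcs Γ) {α β : MIDC} :
    (α.and β) ∈ Γ ↔ α ∈ Γ ∧ β ∈ Γ := by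
  constructor
  · intro hm
    exact ⟨h.closed1 hm (tAndE1 _ _), h.closed1 hm (tAndE2 _ _)⟩
  · rintro ⟨h1, h2⟩
    exact h.closed (l := [α, β]) (by simp [h1, h2]) (tId _)

lemma Mcs.impl_mem {Γ : Set MIDC} (h : Mcs Γ) {α β : MIDC} :
    (α.impl β) ∈ Γ ↔ (α ∈ Γ → β ∈ Γ) := by
  constructor
  · intro hm hα
    exact h.closed (l := [α.impl β, α]) (by simp [hm, hα]) (rap (tAndE1 _ _) (tAndE2 _ _))
  · intro hm
    rcases h.2 α with hα | hα
    · exact h.closed1 (hm hα) (tK _ _)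
    · exact h.closed1 hα (tCompInner (tId (mneg α.toMID)) (tEfq β.toMID))

/-- Box distributes over list conjunctions, provably. -/
lemma boxLAnd (l : List MIDC) :
    T ((lAnd (l.map MIDC.box)).impl (MIDForm.box (lAnd l))) := by
  induction l with
  | nil => exact rconst (.nec (tId _)) _
  | cons a l ih =>
      have boxPair : ∀ x y : MIDForm, T ((x.box.and y.box).impl (x.and y).box) := by
        intro x y
        refine tUncurry ?_
        refine tTrans ((MIDThm.ax (.kbox x (y.impl (x.and y)))).mp (.nec (tAndI x y))) ?_
        exact .ax (.kbox _ _)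
      refine tTrans (bigAnd_cons_eqv _ _).1 ?_
      refine tTrans (tAndMono (tId _) ih) ?_
      refine tTrans (boxPair _ _) ?_
      exact tBoxMono (bigAnd_cons_eqv _ _).2

/-- ¬◇α → □¬α, provably. -/
lemma tNegDiaBox (α : MIDC) :
    T ((mneg (MIDC.dia α).toMID).impl (MIDC.box (α.impl .bot)).toMID) := by
  have b1 : T ((mneg (MIDForm.box (MIDC.impl α .bot).toMID)).impl
      (MIDForm.dia (mneg (MIDC.impl α .bot).toMID))) := .ax (.boxDiaNeg (α.impl .bot))
  have dd : T ((MIDForm.dia (mneg (mneg α.toMID))).impl (MIDForm.dia α.toMID)) :=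
    tDiaMono (.ax (.dne α))
  have c : T ((mneg (MIDForm.box (mneg α.toMID))).impl (MIDForm.dia α.toMID)) :=
    tTrans b1 dd
  have contra : T ((mneg (MIDForm.dia α.toMID)).impl
      (mneg (mneg (MIDForm.box (mneg α.toMID))))) := tPre c _
  exact tTrans contra (.ax (.dne (MIDC.box (α.impl .bot))))

/-- The empty set of classical formulas is consistent (via soundness). -/
lemma con_empty : Con (∅ : Set MIDC) := by
  intro l hl hd
  cases l with
  | cons β l => exact absurd (hl β (List.mem_cons_self)) (Set.notMem_empty _)
  | nil =>
      have := soundness hd ⟨PUnit, ⟨PUnit.unit⟩, fun _ _ => False, fun _ => ∅⟩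
        {PUnit.unit}
      have h2 := this {PUnit.unit} subset_rfl (fun Z hZ hz => hz)
      rw [sat_bot] at h2
      simpa using h2

/-- The canonical model. -/
noncomputable def canonical : KModel where
  W := {Γ : Set MIDC // Mcs Γ}
  ne := by
    obtain ⟨Δ, _, hΔ⟩ := lindenbaum con_empty
    exact ⟨⟨Δ, hΔ⟩⟩
  R := fun Γ Δ => ∀ α, MIDC.box α ∈ Γ.1 → α ∈ Δ.1
  V := fun p => {Γ | MIDC.var p ∈ Γ.1}

/-- Existence lemma for box. -/
lemma exists_box {Γ : Set MIDC} (h : Mcs Γ) {α : MIDC} (hn : MIDC.box α ∉ Γ) :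
    ∃ Δ, Mcs Δ ∧ (∀ β, MIDC.box β ∈ Γ → β ∈ Δ) ∧ α ∉ Δ := by
  have hcon : Con (insert (α.impl .bot) {β | MIDC.box β ∈ Γ}) := by
    intro l hl hd
    set l' := l.filter (· ≠ (α.impl .bot)) with hl'
    have d1 : T ((lAnd l').impl α.toMID) :=
      tTrans (filter_neg_impl hd) (.ax (.dne α))
    have d2 : T ((lAnd (l'.map MIDC.box)).impl (MIDC.box α).toMID) :=
      tTrans (boxLAnd l') (tBoxMono d1)
    refine hn (h.closed (l := l'.map MIDC.box) ?_ d2)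
    intro β hβ
    rw [List.mem_map] at hβ
    obtain ⟨γ, hγ, rfl⟩ := hβ
    have hm := List.mem_filter.1 hγ
    rcases hl γ hm.1 with h' | h'
    · exact absurd h' (by simpa using hm.2)
    · exact h'
  obtain ⟨Δ, hsub, hΔ⟩ := lindenbaum hcon
  refine ⟨Δ, hΔ, fun β hβ => hsub (Set.mem_insert_of_mem _ hβ), fun hα => ?_⟩
  exact hΔ.not_mem_neg hα (hsub (Set.mem_insert _ _))

/-- Existence lemma for diamond. -/
lemma exists_dia {Γ : Set MIDC} (h : Mcs Γ) {α : MIDC} (hd : MIDC.dia α ∈ Γ) :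
    ∃ Δ, Mcs Δ ∧ (∀ β, MIDC.box β ∈ Γ → β ∈ Δ) ∧ α ∈ Δ := by
  have hcon : Con (insert α {β | MIDC.box β ∈ Γ}) := by
    intro l hl hder
    set l' := l.filter (· ≠ α) with hl'
    have d1 : T ((lAnd l').impl (mneg α.toMID)) := filter_neg_impl hder
    have d2 : T ((lAnd (l'.map MIDC.box)).impl (MIDC.box (α.impl .bot)).toMID) :=
      tTrans (boxLAnd l') (tBoxMono d1)
    have hboxmem : MIDC.box (α.impl .bot) ∈ Γ := by
      refine h.closed (l := l'.map MIDC.box) ?_ d2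
      intro β hβ
      rw [List.mem_map] at hβ
      obtain ⟨γ, hγ, rfl⟩ := hβ
      have hm := List.mem_filter.1 hγ
      rcases hl γ hm.1 with h' | h'
      · exact absurd h' (by simpa using hm.2)
      · exact h'
    -- now Γ contains ◇α and □(α→⊥) : contradiction
    refine h.1 [MIDC.dia α, MIDC.box (α.impl .bot)] (by simp [hd, hboxmem]) ?_
    have c1 : T ((MIDForm.and (MIDForm.dia α.toMID)
        (MIDForm.box (mneg α.toMID))).impl (MIDForm.dia .bot)) :=
      rap (tTrans (tAndE2 _ _) (.ax (.kdia α.toMID .bot))) (tAndE1 _ _)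
    exact tTrans (tTrans (bigAnd_cons_eqv _ _).1
      (tAndMono (tId _) (bigAnd_cons_eqv _ _).1)) (tTrans
        (tAndMono (tId _) (tAndE1 _ _)) (tTrans c1 (.ax .negDiaBot)))
  obtain ⟨Δ, hsub, hΔ⟩ := lindenbaum hcon
  exact ⟨Δ, hΔ, fun β hβ => hsub (Set.mem_insert_of_mem _ hβ), hsub (Set.mem_insert _ _)⟩

/-- Truth lemma for the canonical model. -/
theorem truth_lemma (α : MIDC) : ∀ Γ : canonical.W, (wsat canonical Γ α ↔ α ∈ Γ.1) := by
  induction α with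
  | var p => exact fun Γ => Iff.rfl
  | bot => exact fun Γ => ⟨False.elim, fun h => Γ.2.bot_not_mem h⟩
  | and α β ihα ihβ =>
      intro Γ
      show wsat canonical Γ α ∧ wsat canonical Γ β ↔ _
      rw [ihα, ihβ, Γ.2.and_mem]
  | impl α β ihα ihβ =>
      intro Γ
      show (wsat canonical Γ α → wsat canonical Γ β) ↔ _
      rw [ihα, ihβ, Γ.2.impl_mem]
  | box α ih =>
      intro Γ
      show (∀ Δ, canonical.R Γ Δ → wsat canonical Δ α) ↔ _
      constructor
      · intro h
        by_contra hn
        obtain ⟨Δ, hΔ, hR, hα⟩ := exists_box Γ.2 hn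
        exact hα ((ih ⟨Δ, hΔ⟩).1 (h ⟨Δ, hΔ⟩ hR))
      · intro h Δ hR
        exact (ih Δ).2 (hR α h)
  | dia α ih =>
      intro Γ
      show (∃ Δ, canonical.R Γ Δ ∧ wsat canonical Δ α) ↔ _
      constructor
      · rintro ⟨Δ, hR, hα⟩
        by_contra hn
        have hneg : (MIDC.impl (.dia α) .bot) ∈ Γ.1 := (Γ.2.2 _).resolve_left hn
        have hbox : MIDC.box (α.impl .bot) ∈ Γ.1 := Γ.2.closed1 hneg (tNegDiaBox α)
        exact Δ.2.not_mem_neg ((ih Δ).1 hα) (hR _ hbox)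
      · intro h
        obtain ⟨Δ, hΔ, hR, hα⟩ := exists_dia Γ.2 h
        exact ⟨⟨Δ, hΔ⟩, hR, (ih ⟨Δ, hΔ⟩).2 hα⟩

/-- Classical completeness: world-entailment implies derivability. -/
theorem classical_complete {α β : MIDC}
    (h : ∀ (M : KModel) (w : M.W), wsat M w α → wsat M w β) :
    T (α.toMID.impl β.toMID) := by
  by_contra hn
  have hcon : Con ({α, β.impl .bot} : Set MIDC) := by
    intro l hl hd
    have hsub : T ((lAnd [α, β.impl .bot]).impl (lAnd l)) := by
      refine lAnd_subset ?_
      intro γ hγ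
      rcases hl γ hγ with h' | h'
      · exact h' ▸ List.mem_cons_self
      · rw [h']; exact List.mem_cons_of_mem _ (List.mem_cons_self)
    have h1 : T ((lAnd [α, β.impl .bot]).impl .bot) := tTrans hsub hd
    have h2 : T ((MIDForm.and α.toMID (mneg β.toMID)).impl .bot) := h1
    exact hn (tTrans (tCurry h2) (.ax (.dne β)))
  obtain ⟨Δ, hsubΔ, hΔ⟩ := lindenbaum hcon
  have hα : wsat canonical (⟨Δ, hΔ⟩ : canonical.W) α :=
    (truth_lemma α _).2 (hsubΔ (by left; rfl))
  have hβ : β ∈ Δ := (truth_lemma β _).1 (h canonical _ hα)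
  exact hΔ.not_mem_neg hβ (hsubΔ (by right; rfl))

end MIDKit

/-! ### Disjoint unions of models and the final assembly -/

namespace MIDKit

/-- Disjoint union of a family of Kripke models. -/
def sigModel {I : Type} (Mf : I → KModel) (hne : Nonempty (Σ i, (Mf i).W)) : KModel where
  W := Σ i, (Mf i).W
  ne := hne
  R := fun x y => ∃ (i : I) (w v : (Mf i).W), x = ⟨i, w⟩ ∧ y = ⟨i, v⟩ ∧ (Mf i).R w v
  V := fun p => {x | x.2 ∈ (Mf x.1).V p}

lemma wsat_sig {I : Type} (Mf : I → KModel) (hne : Nonempty (Σ i, (Mf i).W)) (γ : MIDC) :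
    ∀ (i : I) (w : (Mf i).W),
      wsat (sigModel Mf hne) ⟨i, w⟩ γ ↔ wsat (Mf i) w γ := by
  induction γ with
  | var p => exact fun i w => Iff.rfl
  | bot => exact fun i w => Iff.rfl
  | and a b iha ihb =>
      intro i w
      show wsat _ _ a ∧ wsat _ _ b ↔ wsat _ _ a ∧ wsat _ _ b
      rw [iha, ihb]
  | impl a b iha ihb =>
      intro i w
      show (wsat _ _ a → wsat _ _ b) ↔ (wsat _ _ a → wsat _ _ b)
      rw [iha, ihb]
  | box a ih =>
      intro i w
      constructor
      · intro h v hv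
        exact (ih i v).1 (h ⟨i, v⟩ ⟨i, w, v, rfl, rfl, hv⟩)
      · rintro h y ⟨j, w', v', hx, rfl, hr⟩
        injection hx with h1 h2
        subst h1
        have h3 : w = w' := eq_of_heq h2
        subst h3
        exact (ih i v').2 (h v' hr)
  | dia a ih =>
      intro i w
      constructor
      · rintro ⟨y, ⟨j, w', v', hx, rfl, hr⟩, hy⟩
        injection hx with h1 h2
        subst h1
        have h3 : w = w' := eq_of_heq h2
        subst h3
        exact ⟨v', hr, (ih i v').1 hy⟩
      · rintro ⟨v, hr, hv⟩
        exact ⟨⟨i, v⟩, ⟨i, w, v, rfl, rfl, hr⟩, (ih i v).2 hv⟩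

lemma sat_bigOr_cases {M : KModel} {X : Set M.W} : ∀ {l : List MIDC},
    M.sat X (bigOr l) → X = ∅ ∨ ∃ β ∈ l, M.csat X β := by
  intro l
  induction l with
  | nil => intro h; exact Or.inl h
  | cons a l ih =>
      rintro (h | h)
      · exact Or.inr ⟨a, List.mem_cons_self, (sat_toMID a X).1 h⟩
      · rcases ih h with h' | ⟨β, hβ, hc⟩
        · exact Or.inl h'
        · exact Or.inr ⟨β, List.mem_cons_of_mem _ hβ, hc⟩

/-- Core lemma: semantic entailment from one classical formula into a big
disjunction can be realized as derivability. -/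
lemma classical_bigOr_complete {α : MIDC} {l : List MIDC}
    (h : ∀ (M : KModel) (X : Set M.W), M.sat X α.toMID → M.sat X (bigOr l)) :
    T (α.toMID.impl (bigOr l)) := by
  by_cases hl : l = []
  · subst hl
    refine classical_complete (β := .bot) ?_
    intro M w hw
    have h1 : M.sat {w} α.toMID := (sat_toMID α _).2 (csat_single.2 hw)
    have h2 : ({w} : Set M.W) = ∅ := h M {w} h1
    simp at h2
  by_cases hex : ∃ β ∈ l, ∀ (M : KModel) (w : M.W), wsat M w α → wsat M w β
  · obtain ⟨β, hβl, hβ⟩ := hex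
    exact tTrans (classical_complete hβ) (bigOr_mem hβl)
  exfalso
  push_neg at hex
  have hch : ∀ i : {β : MIDC // β ∈ l},
      ∃ (M : KModel) (w : M.W), wsat M w α ∧ ¬ wsat M w i.1 :=
    fun i => hex i.1 i.2
  choose Mf wf hwα hwβ using hch
  have hI : Nonempty {β : MIDC // β ∈ l} := by
    cases l with
    | nil => exact absurd rfl hl
    | cons b l' => exact ⟨⟨b, List.mem_cons_self⟩⟩
  have hne : Nonempty (Σ i : {β : MIDC // β ∈ l}, (Mf i).W) := by
    obtain ⟨i⟩ := hI
    obtain ⟨w⟩ := (Mf i).ne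
    exact ⟨⟨i, w⟩⟩
  set N := sigModel Mf hne with hN
  set X : Set N.W := Set.range (fun i => (⟨i, wf i⟩ : Σ i, (Mf i).W)) with hX
  have hXα : N.sat X α.toMID := by
    refine (sat_toMID α X).2 ((csat_flat α X).2 ?_)
    rintro x ⟨i, rfl⟩
    exact (wsat_sig Mf hne α i (wf i)).2 (hwα i)
  have hXl := h N X hXα
  rcases sat_bigOr_cases hXl with hemp | ⟨β, hβ, hc⟩
  · obtain ⟨i⟩ := hI
    have hx : (⟨i, wf i⟩ : Σ i : {β : MIDC // β ∈ l}, (Mf i).W) ∈ X := ⟨i, rfl⟩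
    rw [hemp] at hx
    exact hx
  · have hx : (⟨⟨β, hβ⟩, wf ⟨β, hβ⟩⟩ : Σ i : {β : MIDC // β ∈ l}, (Mf i).W) ∈ X :=
      ⟨⟨β, hβ⟩, rfl⟩
    have := (csat_flat β X).1 hc _ hx
    exact hwβ ⟨β, hβ⟩ ((wsat_sig Mf hne β _ _).1 this)

end MIDKit

namespace MIDKit

lemma bigOr_ent {l₁ l₂ : List MIDC}
    (h : ∀ (M : KModel) (X : Set M.W), M.sat X (bigOr l₁) → M.sat X (bigOr l₂)) :
    T ((bigOr l₁).impl (bigOr l₂)) := by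
  induction l₁ with
  | nil => exact tEfq _
  | cons a l ih =>
      refine tOrE ?_ (ih (fun M X hs => h M X (Or.inr hs)))
      exact classical_bigOr_complete (fun M X hs => h M X (Or.inl hs))

end MIDKit

/-- STATEMENT 10: Completeness of the Hilbert system of MID. -/
theorem mid_completeness (φ ψ : MIDForm) : MIDEntails φ ψ → MIDDer φ ψ := by
  intro h
  obtain ⟨l₁, e₁⟩ := MIDKit.nf φ
  obtain ⟨l₂, e₂⟩ := MIDKit.nf ψ
  have hsem : ∀ (M : KModel) (X : Set M.W),
      M.sat X (MIDKit.bigOr l₁) → M.sat X (MIDKit.bigOr l₂) := by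
    intro M X hs
    exact (MIDKit.Eqv.sound e₂ M X).1 (h M X ((MIDKit.Eqv.sound e₁ M X).2 hs))
  have hthm : MIDThm (φ.impl ψ) :=
    MIDKit.tTrans e₁.1 (MIDKit.tTrans (MIDKit.bigOr_ent hsem) e₂.2)
  exact MIDDer.mp (MIDDer.thm hthm) MIDDer.hyp
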